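/- Let n ≥ 1 and let V_i^{(k)} be the Benenti potentials. For every λ = (λ_1,…,λ_n) ∈ ℝ^n, every r ∈ {1,…,n}, and every k ∈ ℤ (where for k < 0 one assumes all λ_i ≠ 0, so that q_n(λ) ≠ 0), one has ∑_{i=1}^n V_i^{(k)}(q(λ)) · λ_r^{n−i} = λ_r^k, where q(λ) = (q_1(λ),…,q_n(λ)) are the Viète polynomials. -/

import Mathlib

noncomputable section

/-- Viète polynomial `q_i(λ) = (-1)^i e_i(λ)`; by convention `q_0 = 1` and `q_i = 0` for `i > n`. -/
def viete {n : ℕ} (i : ℕ) (lam : Fin n → ℝ) : ℝ :=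
  (-1 : ℝ) ^ i * ∑ s ∈ Finset.powersetCard i (Finset.univ : Finset (Fin n)), ∏ j ∈ s, lam j

/-- The partial derivative `∂q_i/∂λ_j` of the `i`-th Viète polynomial. -/
def vieteD {n : ℕ} (i : ℕ) (lam : Fin n → ℝ) (j : Fin n) : ℝ :=
  fderiv ℝ (viete i) lam (Pi.single j 1)

/-- `Δ_j(λ) = ∏_{s ≠ j} (λ_j - λ_s)`. -/
def Delta {n : ℕ} (lam : Fin n → ℝ) (j : Fin n) : ℝ :=
  ∏ s ∈ Finset.univ.erase j, (lam j - lam s)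

/-- Benenti potentials `V_i^{(k)}` for `k ≥ 0`: `Vpos n q k i = V_i^{(k)}(q)` (`i` 1-based),
with `V_i^{(0)} = δ_{i n}` and `V_i^{(k+1)} = V_{i+1}^{(k)} - q_i V_1^{(k)}`, `V_{n+1}^{(k)} := 0`. -/
def Vpos (n : ℕ) (q : ℕ → ℝ) : ℕ → ℕ → ℝ
  | 0, i => if i = n then 1 else 0
  | k + 1, i => (if i = n then 0 else Vpos n q k (i + 1)) - q i * Vpos n q k 1

/-- Benenti potentials for negative superscripts: `Vneg n q j r = V_r^{(-j)}(q)`, via the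
backward recursion `V_r^{(k)} = V_{r-1}^{(k+1)} - (q_{r-1}/q_n) V_n^{(k+1)}`, with
`V_0 := 0` and `q_0 := 1`. -/
def Vneg (n : ℕ) (q : ℕ → ℝ) : ℕ → ℕ → ℝ
  | 0, r => if r = n then 1 else 0
  | j + 1, r =>
      (if r = 1 then 0 else Vneg n q j (r - 1)) -
        (if r = 1 then 1 else q (r - 1)) / q n * Vneg n q j n

/-- Benenti potential `V_i^{(k)}(q)` for `k : ℤ`, `i` 1-based. -/
def benenti (n : ℕ) (q : ℕ → ℝ) (k : ℤ) (i : ℕ) : ℝ :=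
  if 0 ≤ k then Vpos n q k.toNat i else Vneg n q (-k).toNat i

/-!
Let `x` be a root of `X^n + q_1 X^{n-1} + ⋯ + q_n`; by Vieta every `λ_r` is one. Under the
forward recursion the pairing `∑_i V_i^{(k)} x^{n-i}` gets multiplied by `x`: the shift
`V_{i+1}^{(k)}` multiplies it by `x` up to the term `V_1^{(k)} x^n`, and that term is exactly
what `-V_1^{(k)} ∑_{i ≥ 1} q_i x^{n-i} = V_1^{(k)} x^n` supplies. Dually, the backward recursion
divides it by `x`, now using `x ∑_{i < n} q_i x^{n-1-i} = -q_n`. Since `V^{(0)}` pairs to `1`,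
the pairing is `x^k` for every `k ∈ ℤ`.
-/

open Finset

lemma viete_zero {n : ℕ} (lam : Fin n → ℝ) : viete 0 lam = 1 := by
  simp [viete]

lemma viete_self_ne_zero {n : ℕ} {lam : Fin n → ℝ} (h : ∀ i, lam i ≠ 0) : viete n lam ≠ 0 := by
  have hpow : (univ : Finset (Fin n)).powersetCard n = {univ} := by
    simpa using powersetCard_self (univ : Finset (Fin n))
  simpa [viete, hpow, prod_ne_zero_iff] using h

-- Vieta: `λ_r` is a root of `∏_s (X - λ_s) = ∑_i q_i X^{n-i}`.
lemma sum_viete_mul_pow_eq_zero {n : ℕ} (lam : Fin n → ℝ) (r : Fin n) :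
    ∑ i ∈ range (n + 1), viete i lam * lam r ^ (n - i) = 0 := by
  have h := congrArg (Polynomial.eval (lam r))
    (Multiset.prod_X_sub_X_eq_sum_esymm (univ.val.map lam))
  simp only [Multiset.map_map, Function.comp_apply, Polynomial.eval_multiset_prod,
    Polynomial.eval_finsetSum, Polynomial.eval_mul, Polynomial.eval_pow, Polynomial.eval_neg,
    Polynomial.eval_one, Polynomial.eval_C, Polynomial.eval_X, Polynomial.eval_sub,
    Multiset.card_map, card_val, card_univ, Fintype.card_fin, esymm_map_val] at h
  rw [Multiset.prod_eq_zero (Multiset.mem_map.2 ⟨r, mem_univ_val r, sub_self _⟩)] at h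
  simpa [viete, mul_assoc] using h.symm

def potentialSum (n : ℕ) (V : ℕ → ℝ) (x : ℝ) : ℝ :=
  ∑ i ∈ Icc 1 n, V i * x ^ (n - i)

lemma potentialSum_succ (m : ℕ) (V : ℕ → ℝ) (x : ℝ) :
    potentialSum (m + 1) V x = ∑ i ∈ range (m + 1), V (i + 1) * x ^ (m - i) := by
  rw [potentialSum, ← Ico_add_one_right_eq_Icc, sum_Ico_eq_sum_range]
  simp [add_comm]

lemma potentialSum_indicator_self {n : ℕ} (hn : 1 ≤ n) (x : ℝ) :
    potentialSum n (fun i => if i = n then 1 else 0) x = 1 := by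
  simp [potentialSum, hn]

lemma mul_sum_range_mul_pow (f : ℕ → ℝ) (x : ℝ) (m : ℕ) :
    x * ∑ i ∈ range m, f i * x ^ (m - (i + 1)) = ∑ i ∈ range m, f i * x ^ (m - i) := by
  rw [mul_sum]
  refine sum_congr rfl fun i hi => ?_
  rw [show m - i = m - (i + 1) + 1 by grind, pow_succ]
  ring

lemma benenti_natCast (n : ℕ) (q : ℕ → ℝ) (k : ℕ) : benenti n q k = Vpos n q k := by
  ext i
  simp [benenti]

lemma benenti_neg_natCast (n : ℕ) (q : ℕ → ℝ) (j : ℕ) : benenti n q (-j) = Vneg n q j := by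
  ext i
  rcases j with _ | j
  · simp [benenti, Vpos, Vneg]
  · rw [benenti, if_neg (by omega), neg_neg, Int.toNat_natCast]

section Recursion

variable {m : ℕ} {q : ℕ → ℝ} {x : ℝ}

lemma potentialSum_Vpos_succ (hq0 : q 0 = 1)
    (hroot : ∑ i ∈ range (m + 2), q i * x ^ (m + 1 - i) = 0) (k : ℕ) :
    potentialSum (m + 1) (Vpos (m + 1) q (k + 1)) x =
      x * potentialSum (m + 1) (Vpos (m + 1) q k) x := by
  set W := Vpos (m + 1) q k
  have hq : ∑ i ∈ range (m + 1), q (i + 1) * x ^ (m - i) = -x ^ (m + 1) := by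
    rw [sum_range_succ', hq0] at hroot
    simpa [eq_neg_iff_add_eq_zero] using hroot
  have hshift : ∑ i ∈ range (m + 1), (if i + 1 = m + 1 then 0 else W (i + 2)) * x ^ (m - i)
      = x * ∑ i ∈ range m, W (i + 2) * x ^ (m - (i + 1)) := by
    rw [sum_range_succ, if_pos rfl, zero_mul, add_zero, mul_sum_range_mul_pow]
    exact sum_congr rfl fun i hi => by rw [if_neg (by simp at hi; omega)]
  calc potentialSum (m + 1) (Vpos (m + 1) q (k + 1)) x
      = ∑ i ∈ range (m + 1), (if i + 1 = m + 1 then 0 else W (i + 2)) * x ^ (m - i)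
          - W 1 * ∑ i ∈ range (m + 1), q (i + 1) * x ^ (m - i) := by
        rw [potentialSum_succ, mul_sum, ← sum_sub_distrib]
        exact sum_congr rfl fun i _ => by simp only [Vpos, W]; ring
    _ = x * (∑ i ∈ range m, W (i + 2) * x ^ (m - (i + 1)) + W 1 * x ^ m) := by
        rw [hshift, hq]; ring
    _ = x * potentialSum (m + 1) W x := by
        rw [potentialSum_succ, sum_range_succ']; simp

lemma potentialSum_Vpos (hq0 : q 0 = 1)
    (hroot : ∑ i ∈ range (m + 2), q i * x ^ (m + 1 - i) = 0) (k : ℕ) :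
    potentialSum (m + 1) (Vpos (m + 1) q k) x = x ^ k := by
  induction k with
  | zero => exact potentialSum_indicator_self m.succ_pos x
  | succ k ih => rw [potentialSum_Vpos_succ hq0 hroot, ih, pow_succ']

lemma mul_potentialSum_Vneg_succ (hq0 : q 0 = 1)
    (hroot : ∑ i ∈ range (m + 2), q i * x ^ (m + 1 - i) = 0) (hqn : q (m + 1) ≠ 0) (j : ℕ) :
    x * potentialSum (m + 1) (Vneg (m + 1) q (j + 1)) x =
      potentialSum (m + 1) (Vneg (m + 1) q j) x := by
  set W := Vneg (m + 1) q j
  have hq : x * ∑ i ∈ range (m + 1), q i * x ^ (m - i) = -q (m + 1) := by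
    rw [sum_range_succ, ← mul_sum_range_mul_pow] at hroot
    simpa [eq_neg_iff_add_eq_zero] using hroot
  have hunfold : ∀ i, Vneg (m + 1) q (j + 1) (i + 1) =
      (if i = 0 then 0 else W i) - q i / q (m + 1) * W (m + 1) := by
    rintro (_ | i) <;> simp [Vneg, W, hq0]
  have hshift : ∑ i ∈ range (m + 1), (if i = 0 then 0 else W i) * x ^ (m - i)
      = ∑ i ∈ range m, W (i + 1) * x ^ (m - (i + 1)) := by
    simp [sum_range_succ']
  have hsplit : potentialSum (m + 1) (Vneg (m + 1) q (j + 1)) x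
      = ∑ i ∈ range (m + 1), (if i = 0 then 0 else W i) * x ^ (m - i)
          - W (m + 1) / q (m + 1) * ∑ i ∈ range (m + 1), q i * x ^ (m - i) := by
    rw [potentialSum_succ, mul_sum, ← sum_sub_distrib]
    exact sum_congr rfl fun i _ => by rw [hunfold]; ring
  calc x * potentialSum (m + 1) (Vneg (m + 1) q (j + 1)) x
      = x * ∑ i ∈ range (m + 1), (if i = 0 then 0 else W i) * x ^ (m - i)
          - W (m + 1) / q (m + 1) * (x * ∑ i ∈ range (m + 1), q i * x ^ (m - i)) := by
        rw [hsplit]; ring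
    _ = x * ∑ i ∈ range m, W (i + 1) * x ^ (m - (i + 1)) + W (m + 1) := by
        rw [hshift, hq]; field_simp; ring
    _ = potentialSum (m + 1) W x := by
        rw [mul_sum_range_mul_pow, potentialSum_succ, sum_range_succ]; simp

lemma potentialSum_Vneg (hq0 : q 0 = 1)
    (hroot : ∑ i ∈ range (m + 2), q i * x ^ (m + 1 - i) = 0) (hqn : q (m + 1) ≠ 0) (j : ℕ) :
    potentialSum (m + 1) (Vneg (m + 1) q j) x = (x ^ j)⁻¹ := by
  suffices h : x ^ j * potentialSum (m + 1) (Vneg (m + 1) q j) x = 1 from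
    eq_inv_of_mul_eq_one_right h
  induction j with
  | zero => rw [pow_zero, one_mul]; exact potentialSum_indicator_self m.succ_pos x
  | succ j ih => rw [pow_succ, mul_assoc, mul_potentialSum_Vneg_succ hq0 hroot hqn, ih]

end Recursion

theorem benenti_generating_identity (n : ℕ) (hn : 1 ≤ n) (lam : Fin n → ℝ) (k : ℤ)
    (hneg : k < 0 → ∀ i, lam i ≠ 0) (r : Fin n) :
    (∑ i ∈ Finset.Icc 1 n, benenti n (fun a => viete a lam) k i * lam r ^ (n - i)) =
      lam r ^ k := by
  obtain ⟨m, rfl⟩ : ∃ m, n = m + 1 := ⟨n - 1, by omega⟩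
  have hq0 : viete 0 lam = 1 := viete_zero lam
  have hroot := sum_viete_mul_pow_eq_zero lam r
  change potentialSum (m + 1) (benenti (m + 1) (fun a => viete a lam) k) (lam r) = _
  rcases le_or_gt 0 k with hk | hk
  · lift k to ℕ using hk
    rw [benenti_natCast, zpow_natCast]
    exact potentialSum_Vpos hq0 hroot k
  · obtain ⟨j, rfl⟩ := Int.exists_eq_neg_ofNat hk.le
    rw [benenti_neg_natCast, zpow_neg, zpow_natCast]
    exact potentialSum_Vneg hq0 hroot (viete_self_ne_zero (hneg hk)) j
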